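/- Let φ: B_E → B_E be analytic on the open unit ball of a complex Hilbert space with φ(y) ≠ 0 and Rφ(y) ≠ 0. Then ((1 − ‖y‖²)/‖y‖)·‖Rφ(y)‖ + ‖φ(y)‖²·|⟨Rφ(y)/‖Rφ(y)‖, φ(y)/‖φ(y)‖⟩|² ≤ 1. -/

import Mathlib

/-!
With `u = Rφ(y)/‖Rφ(y)‖` and `v = y/‖y‖`, the slice `g z = ⟪u, φ (z • v)⟫` is a holomorphic
self-map of the unit disc with `g ‖y‖ = ⟪u, φ y⟫` and `|g' ‖y‖| = ‖Rφ(y)‖/‖y‖`. The claim is the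
Schwarz–Pick inequality `(1 - |a|²)|g'(a)| ≤ 1 - |g(a)|²` at `a = ‖y‖`, which in turn is the Schwarz
lemma for `g` composed with disc automorphisms taking `0` to `a` and `g(a)` to `0`.
-/

open Complex ComplexConjugate Metric Set

noncomputable def mobius (b w : ℂ) : ℂ := (w - b) / (1 - conj b * w)

lemma one_sub_conj_mul_ne_zero {b w : ℂ} (hb : ‖b‖ < 1) (hw : ‖w‖ < 1) :
    1 - conj b * w ≠ 0 := by
  rw [sub_ne_zero]
  refine fun h ↦ (norm_one (α := ℂ)).not_lt ?_
  rw [h, norm_mul, norm_conj]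
  nlinarith [norm_nonneg b, norm_nonneg w]

lemma norm_one_sub_conj_mul_sq_sub_norm_sub_sq (b w : ℂ) :
    ‖1 - conj b * w‖ ^ 2 - ‖w - b‖ ^ 2 = (1 - ‖b‖ ^ 2) * (1 - ‖w‖ ^ 2) := by
  simp only [← normSq_eq_norm_sq, normSq_apply, sub_re, sub_im, mul_re, mul_im, conj_re, conj_im,
    one_re, one_im]
  ring

lemma mapsTo_mobius {b : ℂ} (hb : ‖b‖ < 1) : MapsTo (mobius b) (ball 0 1) (ball 0 1) := by
  intro w hw
  rw [mem_ball_zero_iff] at hw ⊢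
  have hden := norm_pos_iff.2 (one_sub_conj_mul_ne_zero hb hw)
  rw [mobius, norm_div, div_lt_one hden, ← sq_lt_sq₀ (norm_nonneg _) hden.le, ← sub_pos,
    norm_one_sub_conj_mul_sq_sub_norm_sub_sq]
  apply mul_pos <;> nlinarith [norm_nonneg b, norm_nonneg w]

lemma hasDerivAt_mobius {b w : ℂ} (hw : 1 - conj b * w ≠ 0) :
    HasDerivAt (mobius b) ((1 - ‖b‖ ^ 2 : ℝ) / (1 - conj b * w) ^ 2) w := by
  have hnum : HasDerivAt (fun z : ℂ ↦ z - b) 1 w := (hasDerivAt_id w).sub_const b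
  have hden : HasDerivAt (fun z : ℂ ↦ 1 - conj b * z) (-conj b) w := by
    simpa using ((hasDerivAt_id w).const_mul (conj b)).const_sub 1
  refine (hnum.div hden hw).congr_deriv ?_
  push_cast
  rw [← conj_mul']
  ring

lemma hasDerivAt_mobius_zero (b : ℂ) : HasDerivAt (mobius b) (1 - ‖b‖ ^ 2 : ℝ) 0 := by
  simpa using hasDerivAt_mobius (b := b) (w := 0) (by simp)

lemma hasDerivAt_mobius_self {b : ℂ} (hb : ‖b‖ < 1) :
    HasDerivAt (mobius b) ((1 - ‖b‖ ^ 2 : ℝ) : ℂ)⁻¹ b := by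
  have hpos : (0 : ℝ) < 1 - ‖b‖ ^ 2 := by nlinarith [norm_nonneg b]
  have hself : 1 - conj b * b = ((1 - ‖b‖ ^ 2 : ℝ) : ℂ) := by push_cast; rw [conj_mul']
  convert hasDerivAt_mobius (one_sub_conj_mul_ne_zero hb hb) using 1
  rw [hself]
  field_simp [ofReal_ne_zero.2 hpos.ne']

lemma differentiableOn_mobius {b : ℂ} (hb : ‖b‖ < 1) : DifferentiableOn ℂ (mobius b) (ball 0 1) :=
  fun _w hw ↦ (hasDerivAt_mobius (one_sub_conj_mul_ne_zero hb (mem_ball_zero_iff.1 hw)))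
    |>.differentiableAt.differentiableWithinAt

theorem one_sub_sq_mul_norm_deriv_le_of_mapsTo_ball {f : ℂ → ℂ}
    (hd : DifferentiableOn ℂ f (ball 0 1)) (hm : MapsTo f (ball 0 1) (ball 0 1))
    {a : ℂ} (ha : ‖a‖ < 1) :
    (1 - ‖a‖ ^ 2) * ‖deriv f a‖ ≤ 1 - ‖f a‖ ^ 2 := by
  have haB : a ∈ ball (0 : ℂ) 1 := mem_ball_zero_iff.2 ha
  have hfa : ‖f a‖ < 1 := mem_ball_zero_iff.1 (hm haB)
  have hna : ‖-a‖ < 1 := by rwa [norm_neg]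
  have hmob0 : mobius (-a) 0 = a := by simp [mobius]
  set F := mobius (f a) ∘ f ∘ mobius (-a)
  have hFd : DifferentiableOn ℂ F (ball 0 1) :=
    (differentiableOn_mobius hfa).comp (hd.comp (differentiableOn_mobius hna) (mapsTo_mobius hna))
      (hm.comp (mapsTo_mobius hna))
  have hFm : MapsTo F (ball 0 1) (closedBall (F 0) 1) := by
    have hF0 : F 0 = 0 := by simp [F, mobius]
    rw [hF0]
    exact ((mapsTo_mobius hfa).comp (hm.comp (mapsTo_mobius hna))).mono_right ball_subset_closedBall
  have hF' : HasDerivAt F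
      (((1 - ‖f a‖ ^ 2 : ℝ) : ℂ)⁻¹ * (deriv f a * (1 - ‖a‖ ^ 2 : ℝ))) 0 := by
    have hf' : HasDerivAt f (deriv f a) (mobius (-a) 0) := by
      rw [hmob0]
      exact (hd.differentiableAt (isOpen_ball.mem_nhds haB)).hasDerivAt
    have hmob' := hasDerivAt_mobius_zero (-a)
    rw [norm_neg] at hmob'
    exact (hasDerivAt_mobius_self hfa).comp_of_eq 0 (hf'.comp 0 hmob') (by simp [hmob0])
  have hpos : (0 : ℝ) < 1 - ‖f a‖ ^ 2 := by nlinarith [norm_nonneg (f a)]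
  have hnonneg : (0 : ℝ) ≤ 1 - ‖a‖ ^ 2 := by nlinarith [norm_nonneg a]
  have hle := Complex.norm_deriv_le_one_of_mapsTo_ball hFd hFm one_pos
  rw [hF'.deriv, norm_mul, norm_mul, norm_inv, norm_real, norm_real, Real.norm_of_nonneg hpos.le,
    Real.norm_of_nonneg hnonneg, inv_mul_le_one₀ hpos] at hle
  linarith

open scoped ComplexInnerProductSpace

theorem one_sub_sq_mul_norm_inner_fderiv_le_of_mapsTo_ball {E F : Type*} [NormedAddCommGroup E]
    [NormedSpace ℂ E] [NormedAddCommGroup F] [InnerProductSpace ℂ F] {φ : E → F}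
    (hd : DifferentiableOn ℂ φ (ball 0 1))
    (hm : MapsTo φ (ball 0 1) (ball 0 1)) {u : F} (hu : ‖u‖ ≤ 1) {v : E} (hv : ‖v‖ ≤ 1)
    {a : ℂ} (ha : ‖a‖ < 1) :
    (1 - ‖a‖ ^ 2) * ‖⟪u, fderiv ℂ φ (a • v) v⟫‖ ≤ 1 - ‖⟪u, φ (a • v)⟫‖ ^ 2 := by
  have hslice : MapsTo (fun z : ℂ ↦ z • v) (ball 0 1) (ball 0 1) := fun z hz ↦ by
    rw [mem_ball_zero_iff] at hz ⊢
    rw [norm_smul]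
    exact (mul_le_of_le_one_right (norm_nonneg z) hv).trans_lt hz
  have hgd : DifferentiableOn ℂ (fun z : ℂ ↦ ⟪u, φ (z • v)⟫) (ball 0 1) :=
    (innerSL ℂ u).differentiable.comp_differentiableOn
      (hd.comp (differentiable_id.smul_const v).differentiableOn hslice)
  have hgm : MapsTo (fun z : ℂ ↦ ⟪u, φ (z • v)⟫) (ball 0 1) (ball 0 1) := fun z hz ↦ by
    rw [mem_ball_zero_iff]
    calc ‖⟪u, φ (z • v)⟫‖ ≤ ‖u‖ * ‖φ (z • v)‖ := norm_inner_le_norm u _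
      _ ≤ ‖φ (z • v)‖ := mul_le_of_le_one_left (norm_nonneg _) hu
      _ < 1 := mem_ball_zero_iff.1 (hm (hslice hz))
  have hg' : HasDerivAt (fun z : ℂ ↦ ⟪u, φ (z • v)⟫) ⟪u, fderiv ℂ φ (a • v) v⟫ a := by
    have hφ' := (hd.differentiableAt (isOpen_ball.mem_nhds (hslice (mem_ball_zero_iff.2 ha))))
      |>.hasFDerivAt
    have hv' : HasDerivAt (fun z : ℂ ↦ z • v) v a := by
      simpa using (hasDerivAt_id a).smul_const v
    exact (innerSL ℂ u).hasFDerivAt.comp_hasDerivAt a (hφ'.comp_hasDerivAt a hv')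
  simpa only [hg'.deriv] using one_sub_sq_mul_norm_deriv_le_of_mapsTo_ball hgd hgm ha

lemma norm_smul_inv_norm_smul {E : Type*} [NormedAddCommGroup E] [NormedSpace ℝ E] (x : E) :
    ‖x‖ • (‖x‖⁻¹ : ℝ) • x = x := by
  rcases eq_or_ne x 0 with rfl | hx
  · simp
  · rw [smul_smul, mul_inv_cancel₀ (norm_ne_zero_iff.2 hx), one_smul]

lemma norm_inv_norm_smul_le_one {E : Type*} [NormedAddCommGroup E] [NormedSpace ℝ E] (x : E) :
    ‖(‖x‖⁻¹ : ℝ) • x‖ ≤ 1 := by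
  rw [norm_smul, norm_inv, norm_norm]
  exact inv_mul_le_one_of_le₀ le_rfl (norm_nonneg x)

section InnerProductSpace

variable {E : Type*} [NormedAddCommGroup E] [InnerProductSpace ℂ E]

lemma norm_inner_real_smul_left (r : ℝ) (x y : E) : ‖⟪r • x, y⟫‖ = |r| * ‖⟪x, y⟫‖ := by
  simp only [CStarModule.inner_smul_left_real, real_smul, norm_mul, norm_real, Real.norm_eq_abs]

lemma norm_inner_real_smul_right (r : ℝ) (x y : E) : ‖⟪x, r • y⟫‖ = |r| * ‖⟪x, y⟫‖ := by
  rw [norm_inner_symm, norm_inner_real_smul_left, norm_inner_symm]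

lemma norm_inner_inv_norm_smul_self (x : E) : ‖⟪(‖x‖⁻¹ : ℝ) • x, x⟫‖ = ‖x‖ := by
  rw [norm_inner_real_smul_left, inner_self_eq_norm_sq_to_K, norm_pow, RCLike.norm_ofReal,
    abs_inv, abs_norm, sq, ← mul_assoc, inv_mul_mul_self]

end InnerProductSpace

theorem radialDeriv_mixed_le_one_general {E : Type*} [NormedAddCommGroup E]
    [InnerProductSpace ℂ E]
    (φ : E → E) (hφ : AnalyticOnNhd ℂ φ (Metric.ball 0 1))
    (hmap : Set.MapsTo φ (Metric.ball (0 : E) 1) (Metric.ball (0 : E) 1))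
    (y : E) (hy : ‖y‖ < 1) :
    (1 - ‖y‖ ^ 2) / ‖y‖ * ‖fderiv ℂ φ y y‖ +
      ‖φ y‖ ^ 2 *
        ‖⟪(‖φ y‖⁻¹ : ℝ) • φ y, (‖fderiv ℂ φ y y‖⁻¹ : ℝ) • fderiv ℂ φ y y⟫‖ ^ 2
      ≤ 1 := by
  set R := fderiv ℂ φ y y
  have hsp := one_sub_sq_mul_norm_inner_fderiv_le_of_mapsTo_ball hφ.differentiableOn hmap
    (norm_inv_norm_smul_le_one R) (norm_inv_norm_smul_le_one y) (a := ‖y‖) (by simpa)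
  rw [Complex.coe_smul, norm_smul_inv_norm_smul, norm_real, norm_norm] at hsp
  have hradial : ‖⟪(‖R‖⁻¹ : ℝ) • R, fderiv ℂ φ y ((‖y‖⁻¹ : ℝ) • y)⟫‖ = ‖R‖ / ‖y‖ := by
    rw [ContinuousLinearMap.map_smul_of_tower, norm_inner_real_smul_right,
      norm_inner_inv_norm_smul_self, abs_inv, abs_norm, inv_mul_eq_div]
  have hvalue : ‖φ y‖ ^ 2 * ‖⟪(‖φ y‖⁻¹ : ℝ) • φ y, (‖R‖⁻¹ : ℝ) • R⟫‖ ^ 2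
      = ‖⟪(‖R‖⁻¹ : ℝ) • R, φ y⟫‖ ^ 2 := by
    rw [← mul_pow, ← abs_norm (φ y), ← norm_inner_real_smul_left, abs_norm,
      norm_smul_inv_norm_smul, norm_inner_symm]
  rw [hradial] at hsp
  rw [hvalue, div_mul_eq_mul_div, mul_div_assoc]
  linarith

/-- For an analytic self-map `φ` of the unit ball of a complex Hilbert space with
`φ(y) ≠ 0` and `Rφ(y) ≠ 0`, where `Rφ(y) = φ'(y)(y)` is the radial derivative:
`((1-‖y‖²)/‖y‖)‖Rφ(y)‖ + ‖φ(y)‖²|⟨Rφ(y)/‖Rφ(y)‖, φ(y)/‖φ(y)‖⟩|² ≤ 1`. -/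
theorem radialDeriv_mixed_le_one {E : Type*} [NormedAddCommGroup E]
    [InnerProductSpace ℂ E] [CompleteSpace E]
    (φ : E → E) (hφ : AnalyticOnNhd ℂ φ (Metric.ball 0 1))
    (hmap : Set.MapsTo φ (Metric.ball (0 : E) 1) (Metric.ball (0 : E) 1))
    (y : E) (hy : ‖y‖ < 1) (hy0 : y ≠ 0)
    (hφy : φ y ≠ 0) (hR : fderiv ℂ φ y y ≠ 0) :
    (1 - ‖y‖ ^ 2) / ‖y‖ * ‖fderiv ℂ φ y y‖ +
      ‖φ y‖ ^ 2 *
        ‖⟪(‖φ y‖⁻¹ : ℝ) • φ y, (‖fderiv ℂ φ y y‖⁻¹ : ℝ) • fderiv ℂ φ y y⟫‖ ^ 2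
      ≤ 1 :=
  radialDeriv_mixed_le_one_general φ hφ hmap y hy
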